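/- The function A(s) = s·(ω_q(s)/((q−1)(ω_q(s)−1)) + ω_q(s)^q/s) is strictly increasing on the interval (0,1). -/

import Mathlib

noncomputable section

open Real Set

/-- `H r z = r·z^(r-1) - (r-1)·z^r`. -/
def H (r z : ℝ) : ℝ := r * z ^ (r - 1) - (r - 1) * z ^ r

/-- `ω` is the inverse of `H r`, mapping `(0,1]` into `[1, r/(r-1))`,
    so that `H r (ω s) = s` for `s ∈ (0,1]`. -/
def IsOmega (r : ℝ) (ω : ℝ → ℝ) : Prop :=
  ∀ s ∈ Set.Ioc (0 : ℝ) 1, ω s ∈ Set.Ico (1 : ℝ) (r / (r - 1)) ∧ H r (ω s) = s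

/-- `τ(s₁,s₂,t) = ((p-q)/p)·(t^p - s₁)/(t^(p-q) - s₁/s₂)`. -/
def tau (p q s₁ s₂ t : ℝ) : ℝ :=
  ((p - q) / p) * ((t ^ p - s₁) / (t ^ (p - q) - s₁ / s₂))

/-- `F(τ)` from the paper, where `ω` plays the role of `ω_q`. -/
def Ffun (p q : ℝ) (ω : ℝ → ℝ) (τ : ℝ) : ℝ :=
  (τ / (1 - ω τ)) * (p - (q * (p - 1) / (q - 1)) * ω τ)
    - q * (p * ω τ ^ (q - 1) - (p - 1) * ω τ ^ q)

/-- `A(s)` from the paper, where `ω` plays the role of `ω_q`. -/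
def Afun (q : ℝ) (ω : ℝ → ℝ) (s : ℝ) : ℝ :=
  s * (ω s / ((q - 1) * (ω s - 1)) + ω s ^ q / s)

/-! On `(0,1)` the relation `s = H_q(ω) = ω^(q-1) (q - (q-1) ω)` collapses `A` to
`A(s) = g(ω_q(s))` with `g(w) = w^q / ((q-1)(w-1))`. Both `ω_q`, the inverse of the decreasing
`H_q`, and `g`, whose derivative has the sign of `(q-1) w - q`, are strictly decreasing on the
relevant intervals, so their composite `A` is strictly increasing. -/

theorem hasDerivAt_H (r : ℝ) {z : ℝ} (hz : 0 < z) :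
    HasDerivAt (H r) (r * (r - 1) * (z ^ (r - 2) - z ^ (r - 1))) z := by
  have h₁ := (hasDerivAt_rpow_const (p := r - 1) (Or.inl hz.ne')).const_mul r
  have h₂ := (hasDerivAt_rpow_const (p := r) (Or.inl hz.ne')).const_mul (r - 1)
  refine (h₁.sub h₂).congr_deriv ?_
  ring_nf

theorem H_one (r : ℝ) : H r 1 = 1 := by
  simp [H]

theorem strictAntiOn_H {r : ℝ} (hr : 1 < r) : StrictAntiOn (H r) (Ici 1) := by
  refine strictAntiOn_of_hasDerivWithinAt_neg (convex_Ici 1)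
    (fun z hz => (hasDerivAt_H r (one_pos.trans_le hz)).continuousAt.continuousWithinAt)
    (fun z hz => (hasDerivAt_H r (zero_lt_one.trans_le (interior_subset hz))).hasDerivWithinAt)
    (fun z hz => ?_)
  rw [interior_Ici] at hz
  have hpow : z ^ (r - 2) < z ^ (r - 1) := rpow_lt_rpow_of_exponent_lt hz (by linarith)
  exact mul_neg_of_pos_of_neg (by nlinarith) (by linarith)

theorem hasDerivAt_rpow_div_sub_one {r w : ℝ} (hr : 1 < r) (hw : 1 < w) :
    HasDerivAt (fun w => w ^ r / ((r - 1) * (w - 1)))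
      (w ^ (r - 1) * ((r - 1) * w - r) / ((r - 1) * (w - 1) ^ 2)) w := by
  have hw₀ : 0 < w := one_pos.trans hw
  have hpow := hasDerivAt_rpow_const (p := r) (Or.inl hw₀.ne')
  have hden := ((hasDerivAt_id' w).sub_const 1).const_mul (r - 1)
  have hne : (r - 1) * (w - 1) ≠ 0 := (mul_pos (by linarith) (by linarith)).ne'
  refine (hpow.div hden hne).congr_deriv ?_
  rw [show w ^ r = w ^ (r - 1) * w by rw [← rpow_add_one hw₀.ne']; ring_nf]
  have : r - 1 ≠ 0 := by linarith
  have : w - 1 ≠ 0 := by linarith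
  field_simp
  ring

theorem strictAntiOn_rpow_div_sub_one {r : ℝ} (hr : 1 < r) :
    StrictAntiOn (fun w => w ^ r / ((r - 1) * (w - 1))) (Ioo 1 (r / (r - 1))) := by
  refine strictAntiOn_of_hasDerivWithinAt_neg (convex_Ioo _ _)
    (fun w hw => (hasDerivAt_rpow_div_sub_one hr hw.1).continuousAt.continuousWithinAt)
    (fun w hw => (hasDerivAt_rpow_div_sub_one hr (interior_subset hw).1).hasDerivWithinAt)
    (fun w hw => ?_)
  rw [interior_Ioo] at hw
  obtain ⟨hw₁, hwr⟩ := hw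
  have hr₁ : 0 < r - 1 := by linarith
  have hlt : (r - 1) * w < r := by rwa [lt_div_iff₀ hr₁, mul_comm] at hwr
  refine div_neg_of_neg_of_pos (mul_neg_of_pos_of_neg ?_ (by linarith)) (by positivity)
  exact rpow_pos_of_pos (one_pos.trans hw₁) _

namespace IsOmega

variable {r : ℝ} {ω : ℝ → ℝ}

theorem one_lt (hω : IsOmega r ω) {s : ℝ} (hs : s ∈ Ioo 0 1) : 1 < ω s := by
  obtain ⟨⟨hω₁, -⟩, hH⟩ := hω s (Ioo_subset_Ioc_self hs)
  refine hω₁.lt_of_ne fun h => hs.2.ne ?_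
  rw [← hH, ← h, H_one]

theorem mapsTo_Ioo (hω : IsOmega r ω) : MapsTo ω (Ioo 0 1) (Ioo 1 (r / (r - 1))) :=
  fun s hs => ⟨hω.one_lt hs, (hω s (Ioo_subset_Ioc_self hs)).1.2⟩

theorem strictAntiOn (hω : IsOmega r ω) (hr : 1 < r) : StrictAntiOn ω (Ioc 0 1) := by
  intro a ha b hb hab
  obtain ⟨⟨ha₁, -⟩, hHa⟩ := hω a ha
  obtain ⟨⟨hb₁, -⟩, hHb⟩ := hω b hb
  refine ((strictAntiOn_H hr).lt_iff_gt (mem_Ici.2 ha₁) (mem_Ici.2 hb₁)).1 ?_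
  rwa [hHa, hHb]

theorem Afun_eq (hω : IsOmega r ω) (hr : 1 < r) {s : ℝ} (hs : s ∈ Ioo 0 1) :
    Afun r ω s = ω s ^ r / ((r - 1) * (ω s - 1)) := by
  have hw₁ := hω.one_lt hs
  have hH : r * ω s ^ (r - 1) - (r - 1) * ω s ^ r = s := (hω s (Ioo_subset_Ioc_self hs)).2
  rw [Afun]
  generalize ω s = w at *
  have hpow : w ^ r = w ^ (r - 1) * w := by rw [← rpow_add_one (by linarith)]; ring_nf
  have hs_eq : s = w ^ (r - 1) * (r - (r - 1) * w) := by rw [← hH, hpow]; ring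
  have hfac : r - (r - 1) * w ≠ 0 := right_ne_zero_of_mul (hs_eq ▸ hs.1.ne')
  have : w ^ (r - 1) ≠ 0 := (rpow_pos_of_pos (by linarith) _).ne'
  have : r - 1 ≠ 0 := by linarith
  have : w - 1 ≠ 0 := by linarith
  rw [hs_eq, hpow]
  field_simp
  ring

end IsOmega

theorem stmt_3_general (q : ℝ) (hq : 1 < q)
    (ωq : ℝ → ℝ) (hωq : IsOmega q ωq) :
    StrictMonoOn (Afun q ωq) (Set.Ioo (0 : ℝ) 1) :=
  ((strictAntiOn_rpow_div_sub_one hq).comp ((hωq.strictAntiOn hq).mono Ioo_subset_Ioc_self)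
    hωq.mapsTo_Ioo).congr fun _ hs => (hωq.Afun_eq hq hs).symm

/-- `A` is strictly increasing on `(0,1)`. -/
theorem stmt_3 (p q : ℝ) (hq : 1 < q) (hqp : q < p)
    (ωq : ℝ → ℝ) (hωq : IsOmega q ωq) :
    StrictMonoOn (Afun q ωq) (Set.Ioo (0 : ℝ) 1) :=
  stmt_3_general q hq ωq hωq
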